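/- Let G be a finite connected simple graph on n ≥ 2 vertices with Laplacian matrix L, and let λ_n be the largest Laplacian eigenvalue. For distinct vertices u and v, the biharmonic distance satisfies d_B(u,v) = √2 / λ_n if and only if G is isomorphic to the complete graph K_n, or for every eigenvector x of L whose eigenvalue λ satisfies 0 < λ < λ_n one has x(u) = x(v). -/

import Mathlib

open Matrix Finset

/-- Uniqueness of the Moore–Penrose pseudoinverse (pure ring algebra). -/
lemma mp_unique {V : Type*} [Fintype V] [DecidableEq V]
    {A B C : Matrix V V ℝ}
    (hB1 : A * B * A = A) (hB2 : B * A * B = B)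
    (hB3 : (A * B)ᵀ = A * B) (hB4 : (B * A)ᵀ = B * A)
    (hC1 : A * C * A = A) (hC2 : C * A * C = C)
    (hC3 : (A * C)ᵀ = A * C) (hC4 : (C * A)ᵀ = C * A) : B = C := by
  have h1 : Aᵀ * Cᵀ * Aᵀ = Aᵀ := by
    rw [← Matrix.transpose_mul, ← Matrix.transpose_mul, ← Matrix.mul_assoc, hC1]
  have hAB : A * B = A * C := by
    calc A * B = Bᵀ * Aᵀ := by rw [← Matrix.transpose_mul, hB3]
    _ = Bᵀ * (Aᵀ * Cᵀ * Aᵀ) := by rw [h1]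
    _ = (Bᵀ * Aᵀ) * (Cᵀ * Aᵀ) := by simp only [Matrix.mul_assoc]
    _ = (A * B) * (A * C) := by
        rw [← Matrix.transpose_mul, ← Matrix.transpose_mul, hB3, hC3]
    _ = A * C := by rw [← Matrix.mul_assoc, hB1]
  have hBA : B * A = C * A := by
    calc B * A = Aᵀ * Bᵀ := by rw [← Matrix.transpose_mul, hB4]
    _ = (Aᵀ * Cᵀ * Aᵀ) * Bᵀ := by rw [h1]
    _ = (Aᵀ * Cᵀ) * (Aᵀ * Bᵀ) := by simp only [Matrix.mul_assoc]
    _ = (C * A) * (B * A) := by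
        rw [← Matrix.transpose_mul, ← Matrix.transpose_mul, hC4, hB4]
    _ = C * (A * B * A) := by simp only [Matrix.mul_assoc]
    _ = C * A := by rw [hB1]
  calc B = B * A * B := hB2.symm
  _ = B * (A * C) := by rw [Matrix.mul_assoc, hAB]
  _ = (B * A) * C := by rw [Matrix.mul_assoc]
  _ = C * A * C := by rw [hBA]
  _ = C := hC2

set_option maxHeartbeats 1000000 in
/-- Equality case for the lower bound: for distinct vertices
`u, v` of a connected graph on `n ≥ 2` vertices, `d_B(u,v) = √2 / λ_n` iff `G`
is isomorphic to the complete graph `K_n`, or every eigenvector of the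
Laplacian whose eigenvalue lies strictly between `0` and `λ_n` takes the same
value at `u` and `v`. -/
theorem biharmonic_distance_eq_sqrt_two_div_lambda_n_iff
    {V : Type*} [Fintype V] [DecidableEq V] {n : ℕ}
    (G : SimpleGraph V) [DecidableRel G.Adj] (hG : G.Connected)
    (hn : Fintype.card V = n) (hn2 : 2 ≤ n)
    (Lp : Matrix V V ℝ)
    (hp1 : G.lapMatrix ℝ * Lp * G.lapMatrix ℝ = G.lapMatrix ℝ)
    (hp2 : Lp * G.lapMatrix ℝ * Lp = Lp)
    (hp3 : (G.lapMatrix ℝ * Lp)ᵀ = G.lapMatrix ℝ * Lp)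
    (hp4 : (Lp * G.lapMatrix ℝ)ᵀ = Lp * G.lapMatrix ℝ)
    (lam : Fin n → ℝ) (z : Fin n → V → ℝ)
    (horth : ∀ i j, ∑ w, z i w * z j w = if i = j then 1 else 0)
    (heig : ∀ k, G.lapMatrix ℝ *ᵥ z k = lam k • z k)
    (hmono : Monotone lam)
    (h0 : lam ⟨0, by omega⟩ = 0)
    (h2pos : 0 < lam ⟨1, by omega⟩)
    (u v : V) (huv : u ≠ v) :
    Real.sqrt ((Lp * Lp) u u + (Lp * Lp) v v - 2 * (Lp * Lp) u v)
        = Real.sqrt 2 / lam ⟨n - 1, by omega⟩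
      ↔ (Nonempty (G ≃g (⊤ : SimpleGraph V))
          ∨ ∀ (μ : ℝ) (x : V → ℝ), x ≠ 0 → G.lapMatrix ℝ *ᵥ x = μ • x →
              0 < μ → μ < lam ⟨n - 1, by omega⟩ → x u = x v) := by
  classical
  set L : Matrix V V ℝ := G.lapMatrix ℝ with hL
  set i0 : Fin n := ⟨0, by omega⟩ with hi0
  set i1 : Fin n := ⟨1, by omega⟩ with hi1
  set iN : Fin n := ⟨n - 1, by omega⟩ with hiN
  -- basic eigenvalue facts
  have hlamN_pos : 0 < lam iN :=
    lt_of_lt_of_le h2pos (hmono (by simp [hi1, hiN, Fin.le_def]; omega))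
  have hlam_le : ∀ k, lam k ≤ lam iN := fun k =>
    hmono (by simp [hiN, Fin.le_def]; omega)
  have hlam_nonneg : ∀ k, 0 ≤ lam k := fun k =>
    h0 ▸ hmono (by simp [hi0, Fin.le_def])
  have hlam_pos : ∀ k, k ≠ i0 → 0 < lam k := by
    intro k hk
    refine lt_of_lt_of_le h2pos (hmono ?_)
    have : (1 : ℕ) ≤ k.val := by
      rcases Nat.eq_zero_or_pos k.val with h | h
      · exact absurd (Fin.ext h) hk
      · exact h
    simpa [hi1, Fin.le_def] using this
  -- spectral setup
  set Z : Matrix (Fin n) V ℝ := Matrix.of z with hZ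
  have hZZt : Z * Zᵀ = 1 := by
    ext i j
    simpa [Matrix.mul_apply, Matrix.one_apply, hZ] using horth i j
  obtain ⟨e⟩ : Nonempty (V ≃ Fin n) := ⟨Fintype.equivFinOfCardEq hn⟩
  have hZtZ : Zᵀ * Z = 1 := by
    set Y : Matrix (Fin n) (Fin n) ℝ := Z.submatrix id e.symm with hY
    have hYYt : Y * Yᵀ = 1 := by
      ext i j
      calc (Y * Yᵀ) i j = ∑ k, Z i (e.symm k) * Z j (e.symm k) := by
            simp [hY, Matrix.mul_apply]
      _ = ∑ w, Z i w * Z j w := Fintype.sum_equiv e.symm _ _ (fun k => rfl)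
      _ = (1 : Matrix (Fin n) (Fin n) ℝ) i j := by
            simpa [Matrix.one_apply, hZ] using horth i j
    have hYtY : Yᵀ * Y = 1 := mul_eq_one_comm.mp hYYt
    ext a b
    calc (Zᵀ * Z) a b = (Yᵀ * Y) (e a) (e b) := by
          simp [hY, Matrix.mul_apply, Matrix.transpose_apply]
    _ = (1 : Matrix V V ℝ) a b := by
          rw [hYtY]
          simp [Matrix.one_apply, e.injective.eq_iff]
  have hZent : ∀ a b : V, ∑ k, z k a * z k b = if a = b then 1 else 0 := by
    intro a b
    have := congrFun (congrFun hZtZ a) b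
    simpa [Matrix.mul_apply, Matrix.one_apply, hZ] using this
  have hLZ : L * Zᵀ = Zᵀ * Matrix.diagonal lam := by
    ext a k
    rw [Matrix.mul_diagonal]
    have h := congrFun (heig k) a
    simp only [Matrix.mulVec, dotProduct, Pi.smul_apply, smul_eq_mul] at h
    simp only [Matrix.mul_apply, Matrix.transpose_apply, hZ, Matrix.of_apply]
    rw [h]; ring
  have hLspec : L = Zᵀ * Matrix.diagonal lam * Z := by
    calc L = L * (Zᵀ * Z) := by rw [hZtZ, Matrix.mul_one]
    _ = (L * Zᵀ) * Z := by rw [Matrix.mul_assoc]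
    _ = _ := by rw [hLZ]
  have sandwich : ∀ d₁ d₂ : Fin n → ℝ,
      (Zᵀ * Matrix.diagonal d₁ * Z) * (Zᵀ * Matrix.diagonal d₂ * Z)
        = Zᵀ * Matrix.diagonal (fun k => d₁ k * d₂ k) * Z := by
    intro d₁ d₂
    calc (Zᵀ * Matrix.diagonal d₁ * Z) * (Zᵀ * Matrix.diagonal d₂ * Z)
        = Zᵀ * Matrix.diagonal d₁ * ((Z * Zᵀ) * (Matrix.diagonal d₂ * Z)) := by
          simp only [Matrix.mul_assoc]
    _ = Zᵀ * (Matrix.diagonal d₁ * Matrix.diagonal d₂) * Z := by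
          rw [hZZt, Matrix.one_mul]; simp only [Matrix.mul_assoc]
    _ = _ := by rw [Matrix.diagonal_mul_diagonal]
  have hsymm : ∀ d : Fin n → ℝ,
      (Zᵀ * Matrix.diagonal d * Z)ᵀ = Zᵀ * Matrix.diagonal d * Z := by
    intro d
    simp [Matrix.transpose_mul, Matrix.diagonal_transpose, Matrix.mul_assoc]
  have entry : ∀ (d : Fin n → ℝ) (a b : V),
      (Zᵀ * Matrix.diagonal d * Z) a b = ∑ k, d k * (z k a * z k b) := by
    intro d a b
    rw [Matrix.mul_apply]
    refine Finset.sum_congr rfl fun k _ => ?_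
    rw [Matrix.mul_diagonal]
    simp [hZ]; ring
  -- the pseudoinverse, spectrally
  set g : Fin n → ℝ := fun k => if k = i0 then 0 else (lam k)⁻¹ with hg
  have hlam0 : lam i0 = 0 := h0
  have hgl : ∀ k, (lam k * g k) * lam k = lam k := by
    intro k
    by_cases hk : k = i0
    · subst hk; simp [hg, hlam0]
    · have := (hlam_pos k hk).ne'
      simp only [hg, if_neg hk]
      field_simp
  have hlg : ∀ k, (g k * lam k) * g k = g k := by
    intro k
    by_cases hk : k = i0
    · subst hk; simp [hg]
    · have := (hlam_pos k hk).ne'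
      simp only [hg, if_neg hk]
      field_simp
  set M : Matrix V V ℝ := Zᵀ * Matrix.diagonal g * Z with hM
  have hM1 : L * M * L = L := by
    rw [hM, hLspec, sandwich, sandwich]
    have : (fun k => lam k * g k * lam k) = lam := funext hgl
    rw [this]
  have hM2 : M * L * M = M := by
    rw [hM, hLspec, sandwich, sandwich]
    have : (fun k => g k * lam k * g k) = g := funext hlg
    rw [this]
  have hM3 : (L * M)ᵀ = L * M := by
    rw [hM, hLspec, sandwich]; exact hsymm _
  have hM4 : (M * L)ᵀ = M * L := by
    rw [hM, hLspec, sandwich]; exact hsymm _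
  have hLpM : Lp = M := mp_unique hp1 hp2 hp3 hp4 hM1 hM2 hM3 hM4
  have hLp2 : Lp * Lp = Zᵀ * Matrix.diagonal (fun k => g k * g k) * Z := by
    rw [hLpM, hM]; exact sandwich g g
  set c : Fin n → ℝ := fun k => z k u - z k v with hc
  have hQ : (Lp * Lp) u u + (Lp * Lp) v v - 2 * (Lp * Lp) u v
      = ∑ k, g k * g k * (c k) ^ 2 := by
    rw [hLp2, entry, entry, entry, ← Finset.sum_add_distrib, Finset.mul_sum,
      ← Finset.sum_sub_distrib]
    refine Finset.sum_congr rfl fun k _ => ?_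
    simp only [hc]; ring
  have hsum2 : ∑ k, (c k) ^ 2 = 2 := by
    have expand : ∀ k : Fin n,
        (c k) ^ 2 = z k u * z k u + z k v * z k v - 2 * (z k u * z k v) := by
      intro k; simp only [hc]; ring
    calc ∑ k, (c k) ^ 2
        = ∑ k, (z k u * z k u + z k v * z k v - 2 * (z k u * z k v)) :=
          Finset.sum_congr rfl fun k _ => expand k
    _ = (∑ k, z k u * z k u) + (∑ k, z k v * z k v) - 2 * ∑ k, z k u * z k v := by
          rw [← Finset.sum_add_distrib, Finset.mul_sum, ← Finset.sum_sub_distrib]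
    _ = 2 := by rw [hZent u u, hZent v v, hZent u v]; simp [huv]; norm_num
  -- kernel of the Laplacian: constants
  have hker : ∀ x : V → ℝ, L *ᵥ x = 0 → x u = x v := by
    intro x hx
    have := (G.lapMatrix_mulVec_eq_zero_iff_forall_reachable (x := x)).mp hx
    exact this u v (hG.preconnected u v)
  have hc0 : c i0 = 0 := by
    have hzz : L *ᵥ z i0 = 0 := by rw [heig, hlam0, zero_smul]
    have := hker (z i0) hzz
    simp [hc, this]
  -- Step A : Q = 2/λ² ↔ E
  set lamN : ℝ := lam iN with hlamN
  set t : ℝ := lamN⁻¹ * lamN⁻¹ with ht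
  have hginv_le : ∀ k, k ≠ i0 → t ≤ g k * g k := by
    intro k hk
    have hpos := hlam_pos k hk
    have hle := hlam_le k
    have h1 : lamN⁻¹ ≤ (lam k)⁻¹ := by
      rw [← one_div, ← one_div]; exact one_div_le_one_div_of_le hpos hle
    have h2 : 0 ≤ lamN⁻¹ := by positivity
    simp only [hg, if_neg hk, ht]
    exact mul_le_mul h1 h1 h2 (inv_nonneg.mpr hpos.le)
  have hterm_nonneg : ∀ k : Fin n, 0 ≤ (g k * g k - t) * (c k) ^ 2 := by
    intro k
    by_cases hk : k = i0
    · subst hk; rw [hc0]; simp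
    · exact mul_nonneg (sub_nonneg.mpr (hginv_le k hk)) (sq_nonneg _)
  have hdiff : (∑ k, g k * g k * (c k) ^ 2) - 2 / lamN ^ 2
      = ∑ k, (g k * g k - t) * (c k) ^ 2 := by
    have : ∑ k, (g k * g k - t) * (c k) ^ 2
        = (∑ k, g k * g k * (c k) ^ 2) - t * ∑ k, (c k) ^ 2 := by
      rw [Finset.mul_sum, ← Finset.sum_sub_distrib]
      exact Finset.sum_congr rfl fun k _ => by ring
    rw [this, hsum2]
    have : 2 / lamN ^ 2 = t * 2 := by
      rw [ht, sq, div_eq_mul_inv, mul_inv, mul_comm]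
    rw [this]
  set E : Prop := ∀ k, lam k < lamN → z k u = z k v with hE
  have stepA : (∑ k, g k * g k * (c k) ^ 2 = 2 / lamN ^ 2) ↔ E := by
    constructor
    · intro hQeq k hk
      have hzero : ∑ k, (g k * g k - t) * (c k) ^ 2 = 0 := by
        rw [← hdiff, hQeq, sub_self]
      have hall := (Finset.sum_eq_zero_iff_of_nonneg
        (fun k _ => hterm_nonneg k)).mp hzero k (Finset.mem_univ k)
      by_cases hk0 : k = i0
      · subst hk0
        have := hc0; simpa [hc, sub_eq_zero] using this
      · have hpos := hlam_pos k hk0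
        have hstrict : t < g k * g k := by
          have h1 : lamN⁻¹ < (lam k)⁻¹ := by
            exact (inv_lt_inv₀ hlamN_pos hpos).mpr hk
          have h2 : 0 < lamN⁻¹ := by positivity
          simp only [hg, if_neg hk0, ht]
          exact mul_lt_mul' h1.le h1 h2.le (h2.trans h1)
        have hcz : (c k) ^ 2 = 0 := by
          rcases mul_eq_zero.mp hall with h | h
          · exact absurd h (sub_ne_zero.mpr hstrict.ne')
          · exact h
        have : c k = 0 := by
          exact pow_eq_zero_iff (n := 2) (by norm_num) |>.mp hcz
        simpa [hc, sub_eq_zero] using this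
    · intro hEE
      have hall : ∀ k ∈ Finset.univ, (g k * g k - t) * (c k) ^ 2 = 0 := by
        intro k _
        rcases lt_or_eq_of_le (hlam_le k) with hlt | heq
        · have : c k = 0 := by
            have := hEE k hlt; simp [hc, this]
          rw [this]; ring
        · by_cases hk0 : k = i0
          · subst hk0; rw [hc0]; ring
          · have : g k * g k = t := by
              simp only [hg, if_neg hk0, ht, heq]
            rw [this, sub_self, zero_mul]
      have : ∑ k, (g k * g k - t) * (c k) ^ 2 = 0 := Finset.sum_eq_zero hall
      have := hdiff ▸ this
      linarith
  -- expansion of arbitrary vectors in the eigenbasis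
  have hexp : ∀ (x : V → ℝ) (a : V), x a = ∑ k, (∑ w, z k w * x w) * z k a := by
    intro x a
    calc x a = ∑ w, (if a = w then (1 : ℝ) else 0) * x w := by simp
    _ = ∑ w, (∑ k, z k a * z k w) * x w := by
        refine Finset.sum_congr rfl fun w _ => ?_
        rw [hZent]
    _ = ∑ w, ∑ k, z k a * z k w * x w := by
        refine Finset.sum_congr rfl fun w _ => ?_
        rw [Finset.sum_mul]
    _ = ∑ k, ∑ w, z k a * z k w * x w := Finset.sum_comm
    _ = ∑ k, (∑ w, z k w * x w) * z k a := by
        refine Finset.sum_congr rfl fun k _ => ?_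
        rw [Finset.sum_mul]
        refine Finset.sum_congr rfl fun w _ => ?_
        ring
  have hsymL : Lᵀ = L := G.isSymm_lapMatrix ℝ
  have keydot : ∀ y x : V → ℝ, (L *ᵥ y) ⬝ᵥ x = y ⬝ᵥ (L *ᵥ x) := by
    intro y x
    calc (L *ᵥ y) ⬝ᵥ x = (Lᵀ *ᵥ y) ⬝ᵥ x := by rw [hsymL]
    _ = (y ᵥ* L) ⬝ᵥ x := by rw [Matrix.mulVec_transpose]
    _ = y ⬝ᵥ (L *ᵥ x) := (Matrix.dotProduct_mulVec y L x).symm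
  have hak : ∀ (μ : ℝ) (x : V → ℝ), L *ᵥ x = μ • x → ∀ k, lam k ≠ μ →
      ∑ w, z k w * x w = 0 := by
    intro μ x hx k hkμ
    have h1 : lam k * (z k ⬝ᵥ x) = μ * (z k ⬝ᵥ x) := by
      have h2 := keydot (z k) x
      rw [heig k, hx] at h2
      simpa [smul_dotProduct, dotProduct_smul, smul_eq_mul] using h2
    have h3 : (lam k - μ) * (z k ⬝ᵥ x) = 0 := by rw [sub_mul, h1, sub_self]
    have h4 := (mul_eq_zero.mp h3).resolve_left (sub_ne_zero.mpr hkμ)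
    simpa [dotProduct] using h4
  have EtoP : E → ∀ (μ : ℝ) (x : V → ℝ), x ≠ 0 → L *ᵥ x = μ • x →
      0 < μ → μ < lamN → x u = x v := by
    intro hEE μ x hx0 hxe hμp hμlt
    have h1 : x u - x v = ∑ k, (∑ w, z k w * x w) * (z k u - z k v) := by
      rw [hexp x u, hexp x v, ← Finset.sum_sub_distrib]
      refine Finset.sum_congr rfl fun k _ => ?_
      ring
    have h2 : ∀ k : Fin n, (∑ w, z k w * x w) * (z k u - z k v) = 0 := by
      intro k
      by_cases hkμ : lam k = μ
      · have := hEE k (by rw [hkμ]; exact hμlt)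
        rw [this, sub_self, mul_zero]
      · rw [hak μ x hxe k hkμ, zero_mul]
    have h3 : x u - x v = 0 := by
      rw [h1]; exact Finset.sum_eq_zero fun k _ => h2 k
    linarith
  have PtoE : (∀ (μ : ℝ) (x : V → ℝ), x ≠ 0 → L *ᵥ x = μ • x →
      0 < μ → μ < lamN → x u = x v) → E := by
    intro hP k hk
    by_cases hk0 : lam k = 0
    · exact hker (z k) (by rw [heig k, hk0, zero_smul])
    · have hpos : 0 < lam k := lt_of_le_of_ne (hlam_nonneg k) (Ne.symm hk0)
      have hzne : z k ≠ 0 := by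
        intro hzz
        have h5 := horth k k
        rw [hzz] at h5
        simp at h5
      exact hP (lam k) (z k) hzne (heig k) hpos hk
  -- complete graph implies the eigenvector condition
  have KntoP : Nonempty (G ≃g (⊤ : SimpleGraph V)) →
      ∀ (μ : ℝ) (x : V → ℝ), x ≠ 0 → L *ᵥ x = μ • x →
        0 < μ → μ < lamN → x u = x v := by
    rintro ⟨φ⟩ μ x hx0 hxe hμp hμlt
    have hadj : ∀ a b : V, G.Adj a b ↔ a ≠ b := by
      intro a b
      rw [← φ.map_adj_iff]
      simp [SimpleGraph.top_adj, φ.toEquiv.injective.ne_iff]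
    have hLK : ∀ (y : V → ℝ) (a : V), (L *ᵥ y) a = n * y a - ∑ w, y w := by
      intro y a
      rw [SimpleGraph.lapMatrix_mulVec_apply]
      have hnb : G.neighborFinset a = Finset.univ.erase a := by
        ext b
        simp [SimpleGraph.mem_neighborFinset, hadj, ne_comm]
      have hdeg : (G.degree a : ℝ) = n - 1 := by
        have hcard : G.degree a = n - 1 := by
          rw [← SimpleGraph.card_neighborFinset_eq_degree, hnb,
            Finset.card_erase_of_mem (Finset.mem_univ a), Finset.card_univ, hn]
        rw [hcard, Nat.cast_sub (by omega : 1 ≤ n)]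
        simp
      rw [hnb]
      have hsum : ∑ w ∈ Finset.univ.erase a, y w = (∑ w, y w) - y a := by
        rw [eq_sub_iff_add_eq, Finset.sum_erase_add _ y (Finset.mem_univ a)]
      rw [hdeg, hsum]; ring
    have main : ∀ (ν : ℝ) (y : V → ℝ), L *ᵥ y = ν • y → ν ≠ (n : ℝ) → 0 < ν →
        y = 0 := by
      intro ν y hy hνn hνp
      have hcst : ∀ a, ((n : ℝ) - ν) * y a = ∑ w, y w := by
        intro a
        have h6 := congrFun hy a
        rw [hLK y a] at h6
        simp only [Pi.smul_apply, smul_eq_mul] at h6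
        linarith
      have hne : (n : ℝ) - ν ≠ 0 := sub_ne_zero.mpr (Ne.symm hνn)
      have hconst : ∀ a b, y a = y b := by
        intro a b
        exact mul_left_cancel₀ hne ((hcst a).trans (hcst b).symm)
      funext a
      have h1 := hcst a
      have h2 : ∑ w, y w = n * y a := by
        calc ∑ w, y w = ∑ _w : V, y a := Finset.sum_congr rfl fun w _ => hconst w a
        _ = n * y a := by
            rw [Finset.sum_const, Finset.card_univ, hn, nsmul_eq_mul]
      rw [h2, sub_mul] at h1
      have h3 : ν * y a = 0 := by linarith
      have h4 := (mul_eq_zero.mp h3).resolve_left hνp.ne'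
      simpa using h4
    have hlamNn : lamN = (n : ℝ) := by
      by_contra hne
      have hz0 : z iN = 0 := main lamN (z iN) (heig iN) hne hlamN_pos
      have h5 := horth iN iN
      simp [hz0] at h5
    have hx0' : x = 0 := main μ x hxe (by rw [← hlamNn]; exact hμlt.ne) hμp
    exact absurd hx0' hx0
  -- sqrt manipulations and final assembly
  have hQnn : 0 ≤ ∑ k, g k * g k * (c k) ^ 2 :=
    Finset.sum_nonneg fun k _ => mul_nonneg (mul_self_nonneg _) (sq_nonneg _)
  have hrhs : Real.sqrt 2 / lamN = Real.sqrt (2 / lamN ^ 2) := by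
    rw [Real.sqrt_div (by norm_num : (0:ℝ) ≤ 2), Real.sqrt_sq hlamN_pos.le]
  constructor
  · intro h
    right
    have hQeq : ∑ k, g k * g k * (c k) ^ 2 = 2 / lamN ^ 2 := by
      rw [hQ, hrhs] at h
      exact (Real.sqrt_inj hQnn (by positivity)).mp h
    exact EtoP (stepA.mp hQeq)
  · intro h
    have hP : ∀ (μ : ℝ) (x : V → ℝ), x ≠ 0 → L *ᵥ x = μ • x →
        0 < μ → μ < lamN → x u = x v := by
      rcases h with h | h
      · exact KntoP h
      · exact h
    have hQeq := stepA.mpr (PtoE hP)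
    rw [hQ, hQeq, hrhs]
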